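/- Let G be a connected finite simple graph in the class SC, with partition of V(G) into the vertex sets of basic 5-cycles C^1,…,C^s (s ≥ 1) and the closed neighborhoods of simplicial vertices x_1,…,x_t, and let x be a vertex of C^1 with degree at least 3 in G. Then both G∖x and G_x := G∖N[x] belong to the class SC, α(G∖x) = 2s + t, and α(G_x) = 2s + t − 1. -/

import Mathlib

open SimpleGraph

variable {V : Type*} {W : Type*}

/-- The open neighborhood `N(x)` of a vertex, as a set. -/
def nbhd (G : SimpleGraph V) (x : V) : Set V := {u | G.Adj x u}

/-- The closed neighborhood `N[x]` of a vertex. -/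
def closedNbhd (G : SimpleGraph V) (x : V) : Set V := insert x {u | G.Adj x u}

/-- The degree of a vertex. -/
noncomputable def deg (G : SimpleGraph V) (x : V) : ℕ := (nbhd G x).ncard

/-- `S` is an independent set of vertices of `G`. -/
def IsIndep (G : SimpleGraph V) (S : Set V) : Prop :=
  ∀ u ∈ S, ∀ w ∈ S, ¬ G.Adj u w

/-- `S` is an independent set contained in `A`, i.e. an independent set of the
induced subgraph of `G` on `A`. -/
def IsIndepOn (G : SimpleGraph V) (A S : Set V) : Prop :=
  S ⊆ A ∧ IsIndep G S

/-- `S` is a maximal independent set of the induced subgraph of `G` on `A`. -/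
def IsMaxIndepOn (G : SimpleGraph V) (A S : Set V) : Prop :=
  IsIndepOn G A S ∧ ∀ T : Set V, IsIndepOn G A T → S ⊆ T → S = T

/-- A graph is well-covered if all its maximal independent sets have the same
cardinality. -/
def WellCovered (G : SimpleGraph V) : Prop :=
  ∀ S T : Set V, IsMaxIndepOn G Set.univ S → IsMaxIndepOn G Set.univ T →
    S.ncard = T.ncard

/-- The independence number `α(G)` of a graph. -/
noncomputable def indepNum (G : SimpleGraph V) : ℕ :=
  sSup {n : ℕ | ∃ S : Set V, IsIndep G S ∧ S.ncard = n}

/-- `VDOn G A` means: the induced subgraph of `G` on `A` is vertex decomposable,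
via the recursive graph-theoretic characterization: it has no edges, or there is
a vertex `v ∈ A` such that both `G∖v` and `G∖N[v]` (within `A`) are vertex
decomposable and no independent set of `G∖N[v]` is a maximal independent set
of `G∖v`. -/
inductive VDOn (G : SimpleGraph V) : Set V → Prop
  | no_edges (A : Set V) (h : ∀ u ∈ A, ∀ w ∈ A, ¬ G.Adj u w) : VDOn G A
  | step (A : Set V) (v : V) (hv : v ∈ A)
      (hdel : VDOn G (A \ {v}))
      (hlk : VDOn G (A \ closedNbhd G v))
      (hshed : ∀ S : Set V, IsIndepOn G (A \ closedNbhd G v) S →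
        ¬ IsMaxIndepOn G (A \ {v}) S) : VDOn G A

/-- A graph is vertex decomposable. -/
def VertexDecomposable (G : SimpleGraph V) : Prop := VDOn G Set.univ

/-- `c` lists the vertices of an `n`-cycle of `G` in cyclic order. -/
def IsCycleMap {n : ℕ} (G : SimpleGraph V) (c : ZMod n → V) : Prop :=
  Function.Injective c ∧ ∀ i : ZMod n, G.Adj (c i) (c (i + 1))

/-- A vertex is simplicial if its closed neighborhood induces a complete graph. -/
def IsSimplicial (G : SimpleGraph V) (x : V) : Prop :=
  ∀ u w : V, G.Adj x u → G.Adj x w → u ≠ w → G.Adj u w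

/-- A basic 5-cycle: a 5-cycle containing no two adjacent vertices that both
have degree at least 3 in `G`. -/
def IsBasic5Cycle (G : SimpleGraph V) (c : ZMod 5 → V) : Prop :=
  IsCycleMap G c ∧ ∀ i : ZMod 5, ¬(3 ≤ deg G (c i) ∧ 3 ≤ deg G (c (i + 1)))

/-- A basic 3-cycle: a 3-cycle containing at least one vertex of degree 2. -/
def IsBasic3Cycle (G : SimpleGraph V) (c : ZMod 3 → V) : Prop :=
  IsCycleMap G c ∧ ∃ i : ZMod 3, deg G (c i) = 2

/-- `x` belongs to a simplex of `G`, i.e. to the closed neighborhood of a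
simplicial vertex. -/
def InSimplex (G : SimpleGraph V) (x : V) : Prop :=
  ∃ v : V, IsSimplicial G v ∧ x ∈ closedNbhd G v

/-- `x` lies on a basic 5-cycle of `G`. -/
def OnBasic5Cycle (G : SimpleGraph V) (x : V) : Prop :=
  ∃ c : ZMod 5 → V, IsBasic5Cycle G c ∧ x ∈ Set.range c

/-- A basic 4-cycle, labelled so that `c 0` and `c 1` are two adjacent vertices
of degree two, and the remaining two vertices `c 2`, `c 3` each belong to a
simplex or to a basic 5-cycle of `G`.  The set `B(Q)` of such a labelled basic
4-cycle is `{c 0, c 1}`. -/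
def IsBasic4Cycle (G : SimpleGraph V) (c : ZMod 4 → V) : Prop :=
  IsCycleMap G c ∧ deg G (c 0) = 2 ∧ deg G (c 1) = 2 ∧
    (InSimplex G (c 2) ∨ OnBasic5Cycle G (c 2)) ∧
    (InSimplex G (c 3) ∨ OnBasic5Cycle G (c 3))

/-- The class `SQC`: the vertex set is partitioned by the closed neighborhoods
of `m` simplicial vertices, the vertex sets of `s` basic 5-cycles and the sets
`B(Q)` of `t` basic 4-cycles. -/
def InSQC (G : SimpleGraph V) : Prop :=
  ∃ (m s t : ℕ) (x : Fin m → V) (c : Fin s → ZMod 5 → V) (q : Fin t → ZMod 4 → V),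
    (∀ i, IsSimplicial G (x i)) ∧
    (∀ j, IsBasic5Cycle G (c j)) ∧
    (∀ k, IsBasic4Cycle G (q k)) ∧
    (∀ v : V, ∃! p : Fin m ⊕ Fin s ⊕ Fin t,
      match p with
      | Sum.inl i => v ∈ closedNbhd G (x i)
      | Sum.inr (Sum.inl j) => v ∈ Set.range (c j)
      | Sum.inr (Sum.inr k) => v = q k 0 ∨ v = q k 1)

/-- The class `SC`: the vertex set is partitioned by the closed neighborhoods
of `m` simplicial vertices and the vertex sets of `s` basic 5-cycles. -/
def InSC (G : SimpleGraph V) : Prop :=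
  ∃ (m s : ℕ) (x : Fin m → V) (c : Fin s → ZMod 5 → V),
    (∀ i, IsSimplicial G (x i)) ∧
    (∀ j, IsBasic5Cycle G (c j)) ∧
    (∀ v : V, ∃! p : Fin m ⊕ Fin s,
      match p with
      | Sum.inl i => v ∈ closedNbhd G (x i)
      | Sum.inr j => v ∈ Set.range (c j))

/-- `{u, w}` is a pendant edge of `G`: an edge incident with a vertex of
degree 1. -/
def PendantEdge (G : SimpleGraph V) (u w : V) : Prop :=
  G.Adj u w ∧ (deg G u = 1 ∨ deg G w = 1)

/-- `P(G)`: vertices incident with pendant edges. -/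
def pendantVerts (G : SimpleGraph V) : Set V := {v | ∃ u, PendantEdge G v u}

/-- `C(G)`: vertices lying on basic 5-cycles. -/
def basic5Verts (G : SimpleGraph V) : Set V := {v | OnBasic5Cycle G v}

/-- The class `PC`: `V(G) = P(G) ∪ C(G)` with `P(G) ∩ C(G) = ∅`, the basic
5-cycles partition `C(G)` (i.e. are pairwise vertex-disjoint), and the pendant
edges form a perfect matching of `P(G)`. -/
def InPC (G : SimpleGraph V) : Prop :=
  pendantVerts G ∪ basic5Verts G = Set.univ ∧
  pendantVerts G ∩ basic5Verts G = ∅ ∧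
  (∀ c c' : ZMod 5 → V, IsBasic5Cycle G c → IsBasic5Cycle G c' →
    Set.range c = Set.range c' ∨ Disjoint (Set.range c) (Set.range c')) ∧
  (∀ v ∈ pendantVerts G, ∃! u : V, PendantEdge G v u)

/-- The induced subgraph of `G` on `B` has no cut vertex: removing any vertex
of `B` leaves it (pre)connected. -/
def NoCutVertexOn (G : SimpleGraph V) (B : Set V) : Prop :=
  ∀ v ∈ B, (G.induce (B \ {v})).Preconnected

/-- `B` is (the vertex set of) a block of `G`: a maximal connected induced
subgraph without a cut vertex. -/
def IsBlockOf (G : SimpleGraph V) (B : Set V) : Prop :=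
  B.Nonempty ∧ (G.induce B).Connected ∧ NoCutVertexOn G B ∧
  ∀ B' : Set V, B ⊆ B' → (G.induce B').Connected → NoCutVertexOn G B' → B' = B

/-- The induced subgraph of `G` on `B` is complete. -/
def IsCompleteOn (G : SimpleGraph V) (B : Set V) : Prop :=
  ∀ u ∈ B, ∀ w ∈ B, u ≠ w → G.Adj u w

/-- The induced subgraph of `G` on `B` is a cycle. -/
def IsCycleOn (G : SimpleGraph V) (B : Set V) : Prop :=
  ∃ n : ℕ, 3 ≤ n ∧ ∃ c : ZMod n → V, Function.Injective c ∧ Set.range c = B ∧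
    ∀ i j : ZMod n, G.Adj (c i) (c j) ↔ (j = i + 1 ∨ i = j + 1)

/-- A block-cactus graph: every block is complete or a cycle. -/
def IsBlockCactus (G : SimpleGraph V) : Prop :=
  ∀ B : Set V, IsBlockOf G B → IsCompleteOn G B ∨ IsCycleOn G B

/-- A cactus graph: connected, and any two (distinct) cycles have at most one
vertex in common. -/
def IsCactus (G : SimpleGraph V) : Prop :=
  G.Connected ∧
  ∀ (n m : ℕ), 3 ≤ n → 3 ≤ m → ∀ (c : ZMod n → V) (c' : ZMod m → V),
    IsCycleMap G c → IsCycleMap G c' →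
    Set.range c = Set.range c' ∨ (Set.range c ∩ Set.range c').Subsingleton

/-- `S` is a pendant edge of `G` incident with `v`. -/
def IncidentPendant (G : SimpleGraph V) (v : V) (S : Set V) : Prop :=
  ∃ u, PendantEdge G v u ∧ S = {v, u}

/-- `S` is (the vertex set of) a basic 3-cycle of `G` through `v`. -/
def IncidentBasic3 (G : SimpleGraph V) (v : V) (S : Set V) : Prop :=
  ∃ c : ZMod 3 → V, IsBasic3Cycle G c ∧ Set.range c = S ∧ v ∈ S

/-- `S` is (the vertex set of) a basic 4-cycle of `G` through `v`. -/
def IncidentBasic4 (G : SimpleGraph V) (v : V) (S : Set V) : Prop :=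
  ∃ c : ZMod 4 → V, IsBasic4Cycle G c ∧ Set.range c = S ∧ v ∈ S

/-- `S` is (the vertex set of) a basic 5-cycle of `G` through `v`. -/
def IncidentBasic5 (G : SimpleGraph V) (v : V) (S : Set V) : Prop :=
  ∃ c : ZMod 5 → V, IsBasic5Cycle G c ∧ Set.range c = S ∧ v ∈ S

/-- `H` is a minor of `G`, witnessed by pairwise disjoint connected branch
sets. -/
def IsMinorOf (H : SimpleGraph W) (G : SimpleGraph V) : Prop :=
  ∃ f : W → Set V,
    (∀ w, (G.induce (f w)).Connected) ∧
    (∀ w w', w ≠ w' → Disjoint (f w) (f w')) ∧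
    (∀ w w', H.Adj w w' → ∃ a ∈ f w, ∃ b ∈ f w', G.Adj a b)

/-- Planarity, via Wagner's characterization: a graph is planar iff it has
neither `K₅` nor `K₃,₃` as a minor. -/
def IsPlanar (G : SimpleGraph V) : Prop :=
  ¬ IsMinorOf (⊤ : SimpleGraph (Fin 5)) G ∧
  ¬ IsMinorOf (completeBipartiteGraph (Fin 3) (Fin 3)) G

/-- The class `W₂`: a well-covered graph such that deleting any vertex leaves a
well-covered graph with the same independence number. -/
def InW2 (G : SimpleGraph V) : Prop :=
  WellCovered G ∧ ∀ x : V,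
    WellCovered (G.induce ({x}ᶜ : Set V)) ∧
    _root_.indepNum (G.induce ({x}ᶜ : Set V)) = _root_.indepNum G

/-- The edge relation of the graph `G_n`, on vertex labels `1, …, 3n-1`
(the vertex `x_i` has label `i`). -/
def gnRel (n : ℕ) (a b : ℕ) : Prop :=
  (a = 1 ∧ b = 2) ∨
  (∃ k : ℕ, 1 ≤ k ∧ k ≤ n - 1 ∧
    ((a = 3 * k - 1 ∧ b = 3 * k) ∨ (a = 3 * k ∧ b = 3 * k + 1) ∨
     (a = 3 * k + 1 ∧ b = 3 * k + 2) ∨ (a = 3 * k + 2 ∧ b = 3 * k - 2))) ∨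
  (∃ l : ℕ, 2 ≤ l ∧ l ≤ n - 1 ∧ a = 3 * l - 3 ∧ b = 3 * l)

/-- The graph `G_n`, with vertex set `{x_1, …, x_{3n-1}}`; the vertex `x_i` is
represented by the element of `Fin (3*n-1)` with value `i - 1`. -/
def Gn (n : ℕ) : SimpleGraph (Fin (3 * n - 1)) :=
  SimpleGraph.fromRel (fun a b => gnRel n (a.1 + 1) (b.1 + 1))

/-- The graph `H_n = G_n ∖ x_{3n-1}`, with vertex set `{x_1, …, x_{3n-2}}`;
the vertex `x_i` is represented by the element of `Fin (3*n-2)` with value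
`i - 1`. -/
def Hn (n : ℕ) : SimpleGraph (Fin (3 * n - 2)) :=
  SimpleGraph.fromRel (fun a b => gnRel n (a.1 + 1) (b.1 + 1))

/-!
Deleting `w` or `N[w]` leaves each simplex `N[x_i]` a simplex with the same apex (`x_i` is not
adjacent to `w`), and each basic 5-cycle that avoids the deleted set a basic 5-cycle. On a
5-cycle through a deleted vertex `u` of degree at least 3, the two cycle-neighbours of `u` have
degree 2, so what is left of the cycle is the union of their closed neighbourhoods, which are
now simplices. Of `C^1` minus `N[w]` only (part of) the edge opposite `w` survives, and it is the
closed neighbourhood of an end of degree 2. So `G∖w` and `G_w` are again in `SC`.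

For `α`, an independent set meets a simplex in at most one vertex and a 5-cycle in at most two,
and `C^1` minus `N[w]` in at most one. The bounds are attained by the apexes `x_i` together with
two non-adjacent vertices of degree 2 on each cycle (one, opposite `w`, on `C^1` in `G_w`): the
neighbourhoods of these vertices stay inside their own part of the partition.
-/

section Neighbourhoods

variable {V : Type*} {G : SimpleGraph V} {A : Set V} {u v w : V}

theorem mem_nbhd : u ∈ nbhd G v ↔ G.Adj v u := Iff.rfl

theorem mem_closedNbhd : u ∈ closedNbhd G v ↔ u = v ∨ G.Adj v u := Iff.rfl

theorem closedNbhd_eq_insert : closedNbhd G v = insert v (nbhd G v) := rfl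

theorem nbhd_subset_closedNbhd : nbhd G v ⊆ closedNbhd G v := Set.subset_insert _ _

theorem notMem_closedNbhd_of_nbhd_subset {B : Set V} (hv : v ∈ B) (hvB : nbhd G v ⊆ B)
    (hw : w ∉ B) : v ∉ closedNbhd G w := by
  rintro (rfl | h)
  · exact hw hv
  · exact hw (hvB h.symm)

theorem closedNbhd_induce (hv : v ∈ A) :
    closedNbhd (G.induce A) ⟨v, hv⟩ = Subtype.val ⁻¹' closedNbhd G v := by
  ext u
  simp [mem_closedNbhd, Subtype.ext_iff]

theorem IsSimplicial.induce (h : IsSimplicial G v) (hv : v ∈ A) :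
    IsSimplicial (G.induce A) ⟨v, hv⟩ :=
  fun _ _ ha hb hab => h _ _ ha hb (Subtype.coe_injective.ne hab)

theorem isSimplicial_induce_of_subsingleton (hv : v ∈ A) (h : (nbhd G v ∩ A).Subsingleton) :
    IsSimplicial (G.induce A) ⟨v, hv⟩ :=
  fun a b ha hb hab => absurd (Subtype.ext (h ⟨ha, a.2⟩ ⟨hb, b.2⟩)) hab

theorem subsingleton_pair_inter {a b : V} (ha : a ∉ A) : (({a, b} : Set V) ∩ A).Subsingleton :=
  Set.subsingleton_singleton.anti fun _ ⟨hz, hzA⟩ => hz.resolve_left fun e => ha (e ▸ hzA)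

theorem isIndep_singleton (v : V) : IsIndep G {v} := by
  rintro a rfl b rfl hab
  exact G.loopless.irrefl _ hab

theorem isIndep_pair {a b : V} (h : ¬ G.Adj a b) : IsIndep G {a, b} := by
  rintro _ (rfl | rfl) _ (rfl | rfl) hab
  exacts [G.loopless.irrefl _ hab, h hab, h hab.symm, G.loopless.irrefl _ hab]

variable [Finite V]

theorem three_le_deg {a b c : V} (ha : G.Adj v a) (hb : G.Adj v b) (hc : G.Adj v c)
    (hab : a ≠ b) (hac : a ≠ c) (hbc : b ≠ c) : 3 ≤ deg G v :=
  (Set.ncard_eq_three.mpr ⟨a, b, c, hab, hac, hbc, rfl⟩).symm.le.trans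
    (Set.ncard_le_ncard (by simp [Set.insert_subset_iff, mem_nbhd, ha, hb, hc]))

theorem nbhd_eq_pair {a b : V} (ha : G.Adj v a) (hb : G.Adj v b) (hab : a ≠ b)
    (h : deg G v ≤ 2) : nbhd G v = {a, b} :=
  (Set.eq_of_subset_of_ncard_le (by simp [Set.insert_subset_iff, mem_nbhd, ha, hb])
    (by rw [Set.ncard_pair hab]; exact h)).symm

theorem IsSimplicial.ncard_inter_closedNbhd_le_one (h : IsSimplicial G v) {S : Set V}
    (hS : IsIndep G S) : (S ∩ closedNbhd G v).ncard ≤ 1 := by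
  refine (Set.ncard_le_one (Set.toFinite _)).2 fun a ⟨ha, hav⟩ b ⟨hb, hbv⟩ => ?_
  by_contra hab
  refine hS a ha b hb ?_
  rcases hav with rfl | hav <;> rcases hbv with rfl | hbv
  exacts [absurd rfl hab, hbv, hav.symm, h a b hav hbv hab]

theorem deg_induce_le (u : A) : deg (G.induce A) u ≤ deg G u := by
  rw [deg, ← Set.ncard_image_of_injective _ Subtype.val_injective]
  exact Set.ncard_le_ncard (by rintro _ ⟨z, hz, rfl⟩; exact hz)

end Neighbourhoods

section FiveCycle

variable {V : Type*} {G : SimpleGraph V} {d : ZMod 5 → V} {i j k : ZMod 5} {w : V}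

theorem sub_one_ne_add_one_zmod_five (i : ZMod 5) : i - 1 ≠ i + 1 := by
  revert i
  decide

theorem IsCycleMap.adj_sub_one (hd : IsCycleMap G d) (i : ZMod 5) : G.Adj (d i) (d (i - 1)) := by
  simpa using (hd.2 (i - 1)).symm

theorem IsCycleMap.ncard_inter_le_two (hd : IsCycleMap G d) {S : Set V} (hS : IsIndep G S) :
    (S ∩ Set.range d).ncard ≤ 2 := by
  classical
  have hT : ∀ T : Finset (ZMod 5), (∀ k ∈ T, k + 1 ∉ T) → T.card ≤ 2 := by decide
  rw [← Set.image_preimage_eq_inter_range, Set.ncard_image_of_injective _ hd.1,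
    Set.ncard_eq_toFinset_card']
  refine hT _ fun k hk hk1 => ?_
  simp only [Set.mem_toFinset, Set.mem_preimage] at hk hk1
  exact hS _ hk _ hk1 (hd.2 k)

theorem IsCycleMap.eq_two_or_eq_three_of_notMem (hd : IsCycleMap G d)
    (h : d i ∉ closedNbhd G (d 0)) : i = 2 ∨ i = 3 := by
  fin_cases i
  · exact absurd (Or.inl rfl) h
  · exact absurd (Or.inr (hd.2 0)) h
  · exact Or.inl rfl
  · exact Or.inr rfl
  · exact absurd (Or.inr (hd.adj_sub_one 0)) h

theorem IsCycleMap.ncard_inter_le_one (hd : IsCycleMap G d) {S : Set V} (hS : IsIndep G S)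
    (hSA : S ⊆ (closedNbhd G (d 0))ᶜ) : (S ∩ Set.range d).ncard ≤ 1 := by
  refine (Set.ncard_le_one (Set.toFinite _)).2 ?_
  rintro _ ⟨ha, k, rfl⟩ _ ⟨hb, l, rfl⟩
  have h23 : G.Adj (d 2) (d 3) := hd.2 2
  rcases hd.eq_two_or_eq_three_of_notMem (hSA ha) with rfl | rfl <;>
    rcases hd.eq_two_or_eq_three_of_notMem (hSA hb) with rfl | rfl
  · rfl
  · exact absurd h23 (hS _ ha _ hb)
  · exact absurd h23.symm (hS _ ha _ hb)
  · rfl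

theorem IsBasic5Cycle.deg_add_one_le_two (hd : IsBasic5Cycle G d) (h : 3 ≤ deg G (d i)) :
    deg G (d (i + 1)) ≤ 2 := by
  have := hd.2 i
  omega

theorem IsBasic5Cycle.deg_sub_one_le_two (hd : IsBasic5Cycle G d) (h : 3 ≤ deg G (d i)) :
    deg G (d (i - 1)) ≤ 2 := by
  have := hd.2 (i - 1)
  rw [sub_add_cancel] at this
  omega

theorem IsBasic5Cycle.deg_le_two_or (hd : IsBasic5Cycle G d) (i : ZMod 5) :
    deg G (d i) ≤ 2 ∨ deg G (d (i + 1)) ≤ 2 := by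
  have := hd.2 i
  omega

theorem IsBasic5Cycle.exists_deg_le_two (hd : IsBasic5Cycle G d) :
    ∃ k, (k = 2 ∨ k = 3) ∧ deg G (d k) ≤ 2 := by
  rcases hd.deg_le_two_or 2 with h | h
  exacts [⟨2, Or.inl rfl, h⟩, ⟨3, Or.inr rfl, h⟩]

theorem IsBasic5Cycle.comp_add (hd : IsBasic5Cycle G d) (k : ZMod 5) :
    IsBasic5Cycle G (fun i => d (i + k)) :=
  ⟨⟨hd.1.1.comp (add_left_injective k), fun i => by simpa [add_right_comm] using hd.1.2 (i + k)⟩,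
    fun i => by simpa [add_right_comm] using hd.2 (i + k)⟩

theorem IsBasic5Cycle.exists_rotate (hd : IsBasic5Cycle G d) (hw : w ∈ Set.range d) :
    ∃ d' : ZMod 5 → V, IsBasic5Cycle G d' ∧ Set.range d' = Set.range d ∧ d' 0 = w := by
  obtain ⟨k, rfl⟩ := hw
  exact ⟨_, hd.comp_add k, (add_right_surjective k).range_comp d, by simp⟩

variable [Finite V]

theorem IsCycleMap.nbhd_eq (hd : IsCycleMap G d) (hj : i - 1 = j) (hk : i + 1 = k)
    (h : deg G (d i) ≤ 2) : nbhd G (d i) = {d j, d k} := by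
  subst hj hk
  exact nbhd_eq_pair (hd.adj_sub_one i) (hd.2 i) (hd.1.ne (sub_one_ne_add_one_zmod_five i)) h

theorem IsBasic5Cycle.nbhd_one (hd : IsBasic5Cycle G d) (h0 : 3 ≤ deg G (d 0)) :
    nbhd G (d 1) = {d 0, d 2} :=
  hd.1.nbhd_eq (by decide) (by decide) (hd.deg_add_one_le_two h0)

theorem IsBasic5Cycle.nbhd_four (hd : IsBasic5Cycle G d) (h0 : 3 ≤ deg G (d 0)) :
    nbhd G (d 4) = {d 0, d 3} := by
  rw [Set.pair_comm]
  exact hd.1.nbhd_eq (by decide) (by decide) (hd.deg_sub_one_le_two h0)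

theorem IsCycleMap.nbhd_subset_range (hd : IsCycleMap G d) (h : deg G (d i) ≤ 2) :
    nbhd G (d i) ⊆ Set.range d := by
  rw [hd.nbhd_eq rfl rfl h]
  rintro _ (rfl | rfl) <;> exact ⟨_, rfl⟩

theorem IsCycleMap.three_le_deg (hd : IsCycleMap G d) (hw : w ∉ Set.range d)
    (h : G.Adj w (d i)) : 3 ≤ deg G (d i) :=
  _root_.three_le_deg (hd.adj_sub_one i) (hd.2 i) h.symm (hd.1.ne (sub_one_ne_add_one_zmod_five i))
    (fun e => hw ⟨_, e⟩) (fun e => hw ⟨_, e⟩)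

theorem IsCycleMap.notMem_closedNbhd_zero (hd : IsCycleMap G d) (hk : k = 2 ∨ k = 3)
    (h : deg G (d k) ≤ 2) : d k ∉ closedNbhd G (d 0) := by
  rintro (e | e)
  · rcases hk with rfl | rfl <;> exact absurd (hd.1 e) (by decide)
  · have : d 0 ∈ nbhd G (d k) := e.symm
    rw [hd.nbhd_eq rfl rfl h] at this
    rcases hk with rfl | rfl <;> rcases this with e | e <;> exact absurd (hd.1 e) (by decide)

theorem IsBasic5Cycle.exists_isIndep_pair (hd : IsBasic5Cycle G d) :
    ∃ T ⊆ Set.range d, IsIndep G T ∧ T.ncard = 2 ∧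
      ∀ v ∈ T, deg G v ≤ 2 ∧ nbhd G v ⊆ Set.range d := by
  have pair : ∀ k l, deg G (d k) ≤ 2 → deg G (d l) ≤ 2 → l ≠ k - 1 → l ≠ k + 1 → l ≠ k →
      ∃ T ⊆ Set.range d, IsIndep G T ∧ T.ncard = 2 ∧
        ∀ v ∈ T, deg G v ≤ 2 ∧ nbhd G v ⊆ Set.range d := by
    intro k l hk hl h1 h2 h3
    refine ⟨{d k, d l}, ?_, isIndep_pair fun h => ?_, Set.ncard_pair (hd.1.1.ne h3.symm), ?_⟩
    · rintro _ (rfl | rfl) <;> exact ⟨_, rfl⟩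
    · have : d l ∈ nbhd G (d k) := h
      rw [hd.1.nbhd_eq rfl rfl hk] at this
      rcases this with e | e
      exacts [h1 (hd.1.1 e), h2 (hd.1.1 e)]
    · rintro _ (rfl | rfl)
      exacts [⟨hk, hd.1.nbhd_subset_range hk⟩, ⟨hl, hd.1.nbhd_subset_range hl⟩]
  by_cases h0 : deg G (d 0) ≤ 2
  · rcases hd.deg_le_two_or 2 with h | h
    · exact pair 0 2 h0 h (by decide) (by decide) (by decide)
    · exact pair 0 3 h0 h (by decide) (by decide) (by decide)
  · have h0 : 3 ≤ deg G (d 0) := by omega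
    exact pair 1 4 (hd.deg_add_one_le_two h0) (hd.deg_sub_one_le_two h0) (by decide) (by decide)
      (by decide)

end FiveCycle

section SCPartition

open Function

theorem pairwise_disjoint_of_existsUnique_mem {α ι : Type*} {S : ι → Set α}
    (h : ∀ a, ∃! i, a ∈ S i) : Pairwise (Disjoint on S) := fun _ _ hij =>
  Set.disjoint_left.2 fun a hi hj => hij ((h a).unique hi hj)

variable {U : Type*} (H : SimpleGraph U)

def IsSCPiece (B : Set U) : Prop :=
  (∃ v, IsSimplicial H v ∧ B = closedNbhd H v) ∨
    ∃ d : ZMod 5 → U, IsBasic5Cycle H d ∧ B = Set.range d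

structure IsSCPartition (S : Set U) (Q : Set (Set U)) : Prop where
  isSCPiece : ∀ B ∈ Q, IsSCPiece H B
  subset : ∀ B ∈ Q, B ⊆ S
  cover : ∀ u ∈ S, ∃ B ∈ Q, u ∈ B
  pairwiseDisjoint : Q.PairwiseDisjoint id

variable {H}

theorem isSCPartition_singleton {B : Set U} (h : IsSCPiece H B) : IsSCPartition H B {B} :=
  ⟨fun _ hB' => hB' ▸ h, fun _ hB' => hB'.le, fun _ hu => ⟨B, rfl, hu⟩,
    Set.pairwiseDisjoint_singleton _ _⟩

theorem IsSCPartition.iUnion {ι : Type*} {S : ι → Set U} {Q : ι → Set (Set U)}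
    (hS : Pairwise (Disjoint on S)) (h : ∀ i, IsSCPartition H (S i) (Q i)) :
    IsSCPartition H (⋃ i, S i) (⋃ i, Q i) := by
  refine ⟨fun B hB => ?_, fun B hB => ?_, fun u hu => ?_, fun B hB B' hB' hne => ?_⟩
  · obtain ⟨i, hB⟩ := Set.mem_iUnion.1 hB
    exact (h i).isSCPiece B hB
  · obtain ⟨i, hB⟩ := Set.mem_iUnion.1 hB
    exact ((h i).subset B hB).trans (Set.subset_iUnion S i)
  · obtain ⟨i, hu⟩ := Set.mem_iUnion.1 hu
    obtain ⟨B, hB, huB⟩ := (h i).cover u hu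
    exact ⟨B, Set.mem_iUnion.2 ⟨i, hB⟩, huB⟩
  · obtain ⟨i, hB⟩ := Set.mem_iUnion.1 hB
    obtain ⟨i', hB'⟩ := Set.mem_iUnion.1 hB'
    obtain rfl | hii' := eq_or_ne i i'
    · exact (h i).pairwiseDisjoint hB hB' hne
    · exact (hS hii').mono ((h i).subset B hB) ((h i').subset B' hB')

theorem IsSCPartition.inSC [Finite U] {Q : Set (Set U)} (h : IsSCPartition H Set.univ Q) :
    InSC H := by
  classical
  let IsSimplex : Q → Prop := fun B => ∃ v, IsSimplicial H v ∧ (B : Set U) = closedNbhd H v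
  choose v hv hvB using fun B : {B : Q // IsSimplex B} => B.2
  choose d hd hdB using fun B : {B : Q // ¬ IsSimplex B} => (h.isSCPiece _ B.1.2).resolve_left B.2
  let eS := Finite.equivFin {B : Q // IsSimplex B}
  let eC := Finite.equivFin {B : Q // ¬ IsSimplex B}
  let e := (Equiv.sumCongr eS.symm eC.symm).trans (Equiv.sumCompl IsSimplex)
  refine ⟨_, _, fun i => v (eS.symm i), fun j => d (eC.symm j), fun i => hv _, fun j => hd _,
    fun u => ?_⟩
  have hinl : ∀ i, (e (Sum.inl i) : Set U) = closedNbhd H (v (eS.symm i)) := fun i => hvB _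
  have hinr : ∀ j, (e (Sum.inr j) : Set U) = Set.range (d (eC.symm j)) := fun j => hdB _
  obtain ⟨B, hB, huB⟩ := h.cover u trivial
  have huniq : ∀ p, u ∈ (e p : Set U) → p = e.symm ⟨B, hB⟩ := fun p hp =>
    e.eq_symm_apply.2 (Subtype.ext (h.pairwiseDisjoint.elim (e p).2 hB
      (Set.not_disjoint_iff.2 ⟨u, hp, huB⟩)))
  have hB' : u ∈ (e (e.symm ⟨B, hB⟩) : Set U) := by rwa [Equiv.apply_symm_apply]
  refine ⟨e.symm ⟨B, hB⟩, ?_, ?_⟩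
  · generalize e.symm ⟨B, hB⟩ = p at hB'
    rcases p with i | j
    · rwa [hinl] at hB'
    · rwa [hinr] at hB'
  · rintro (i | j) hp
    · exact huniq _ (by rwa [hinl])
    · exact huniq _ (by rwa [hinr])

theorem inSC_of_forall_exists_isSCPartition [Finite U] {ι : Type*} (S : ι → Set U)
    (hS : ∀ u, ∃! i, u ∈ S i) (h : ∀ i, ∃ Q, IsSCPartition H (S i) Q) : InSC H := by
  choose Q hQ using h
  have hcover : (⋃ i, S i) = Set.univ := Set.eq_univ_of_forall fun u =>
    Set.mem_iUnion.2 (hS u).exists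
  exact (hcover ▸ IsSCPartition.iUnion (pairwise_disjoint_of_existsUnique_mem hS) hQ).inSC

end SCPartition

section InducedPartition

variable {V : Type*} {G : SimpleGraph V} {A : Set V} {d : ZMod 5 → V} {k : ZMod 5} {v w : V}

theorem isSCPiece_induce_closedNbhd (hv : v ∈ A) (h : IsSimplicial (G.induce A) ⟨v, hv⟩) :
    IsSCPiece (G.induce A) (Subtype.val ⁻¹' closedNbhd G v) :=
  Or.inl ⟨_, h, (closedNbhd_induce hv).symm⟩

theorem IsSimplicial.isSCPartition_induce (h : IsSimplicial G v) (hv : v ∈ A) :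
    IsSCPartition (G.induce A) (Subtype.val ⁻¹' closedNbhd G v)
      {Subtype.val ⁻¹' closedNbhd G v} :=
  isSCPartition_singleton (isSCPiece_induce_closedNbhd hv (h.induce hv))

variable [Finite V]

theorem IsBasic5Cycle.induce (hd : IsBasic5Cycle G d) (hA : ∀ i, d i ∈ A) :
    IsBasic5Cycle (G.induce A) (fun i => ⟨d i, hA i⟩) :=
  ⟨⟨fun _ _ hij => hd.1.1 (congrArg Subtype.val hij), hd.1.2⟩,
    fun i h => hd.2 i ⟨h.1.trans (deg_induce_le _), h.2.trans (deg_induce_le _)⟩⟩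

theorem IsBasic5Cycle.isSCPartition_induce (hd : IsBasic5Cycle G d) (hA : Set.range d ⊆ A) :
    IsSCPartition (G.induce A) (Subtype.val ⁻¹' Set.range d) {Subtype.val ⁻¹' Set.range d} := by
  refine isSCPartition_singleton (Or.inr ⟨_, hd.induce fun i => hA ⟨i, rfl⟩, ?_⟩)
  ext u
  simp [Subtype.ext_iff]

theorem IsBasic5Cycle.range_eq_closedNbhd_one_union_four (hd : IsBasic5Cycle G d)
    (h0 : 3 ≤ deg G (d 0)) :
    Set.range d = closedNbhd G (d 1) ∪ closedNbhd G (d 4) ∧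
      closedNbhd G (d 1) ∩ closedNbhd G (d 4) = {d 0} := by
  rw [closedNbhd_eq_insert, closedNbhd_eq_insert, hd.nbhd_one h0, hd.nbhd_four h0]
  constructor
  · ext u
    simp only [Set.mem_range, Set.mem_union, Set.mem_insert_iff, Set.mem_singleton_iff]
    constructor
    · rintro ⟨k, rfl⟩
      fin_cases k <;> tauto
    · rintro ((rfl | rfl | rfl) | (rfl | rfl | rfl)) <;> exact ⟨_, rfl⟩
  · ext u
    simp only [Set.mem_inter_iff, Set.mem_insert_iff, Set.mem_singleton_iff]
    constructor
    · rintro ⟨rfl | rfl | rfl, h | h | h⟩ <;> first | rfl | exact absurd (hd.1.1 h) (by decide)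
    · rintro rfl
      simp

theorem IsBasic5Cycle.isSCPartition_induce_of_three_le_deg (hd : IsBasic5Cycle G d)
    (h0 : 3 ≤ deg G (d 0)) (hA0 : d 0 ∉ A) (hA1 : d 1 ∈ A) (hA4 : d 4 ∈ A) :
    IsSCPartition (G.induce A) (Subtype.val ⁻¹' Set.range d)
      {Subtype.val ⁻¹' closedNbhd G (d 1), Subtype.val ⁻¹' closedNbhd G (d 4)} := by
  obtain ⟨hunion, hinter⟩ := hd.range_eq_closedNbhd_one_union_four h0
  refine ⟨?_, ?_, ?_, ?_⟩
  · rintro B (rfl | rfl)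
    · exact isSCPiece_induce_closedNbhd hA1 <| isSimplicial_induce_of_subsingleton hA1 <|
        hd.nbhd_one h0 ▸ subsingleton_pair_inter hA0
    · exact isSCPiece_induce_closedNbhd hA4 <| isSimplicial_induce_of_subsingleton hA4 <|
        hd.nbhd_four h0 ▸ subsingleton_pair_inter hA0
  · rintro B (rfl | rfl) <;> refine Set.preimage_mono ?_ <;> rw [hunion]
    exacts [Set.subset_union_left, Set.subset_union_right]
  · intro u hu
    rw [Set.mem_preimage, hunion] at hu
    rcases hu with hu | hu
    exacts [⟨_, Or.inl rfl, hu⟩, ⟨_, Or.inr rfl, hu⟩]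
  · refine (Set.pairwiseDisjoint_singleton _ _).insert fun B hB _ => ?_
    rw [Set.mem_singleton_iff.1 hB]
    refine Set.disjoint_left.2 fun u h1 h4 => hA0 ?_
    have hu : u.1 ∈ closedNbhd G (d 1) ∩ closedNbhd G (d 4) := ⟨h1, h4⟩
    rw [hinter, Set.mem_singleton_iff] at hu
    exact hu ▸ u.2

theorem IsBasic5Cycle.isSCPartition_induce_compl_closedNbhd (hd : IsBasic5Cycle G d)
    (hk : k = 2 ∨ k = 3) (h : deg G (d k) ≤ 2) :
    IsSCPartition (G.induce (closedNbhd G (d 0))ᶜ) (Subtype.val ⁻¹' Set.range d)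
      {Subtype.val ⁻¹' closedNbhd G (d k)} := by
  have hkA : d k ∈ (closedNbhd G (d 0))ᶜ := hd.1.notMem_closedNbhd_zero hk h
  have hnbhd := hd.1.nbhd_eq rfl rfl h
  have hsub : (nbhd G (d k) ∩ (closedNbhd G (d 0))ᶜ).Subsingleton := by
    rw [hnbhd]
    rcases hk with rfl | rfl
    · exact subsingleton_pair_inter fun h => h (Or.inr (hd.1.2 0))
    · rw [Set.pair_comm]
      exact subsingleton_pair_inter fun h => h (Or.inr (hd.1.adj_sub_one 0))
  have hrange : Subtype.val ⁻¹' Set.range d =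
      (Subtype.val ⁻¹' closedNbhd G (d k) : Set ↥((closedNbhd G (d 0))ᶜ)) := by
    ext u
    refine ⟨fun ⟨l, hl⟩ => ?_, fun hu => ?_⟩
    · have hl23 := hd.1.eq_two_or_eq_three_of_notMem (hl ▸ u.2)
      rw [Set.mem_preimage, ← hl, closedNbhd_eq_insert, hnbhd]
      rcases hk with rfl | rfl <;> rcases hl23 with rfl | rfl
      exacts [Or.inl rfl, Or.inr (Or.inr rfl), Or.inr (Or.inl rfl), Or.inl rfl]
    · rw [Set.mem_preimage, closedNbhd_eq_insert] at hu
      rcases hu with hu | hu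
      exacts [⟨k, hu.symm⟩, hd.1.nbhd_subset_range h hu]
  rw [hrange]
  exact isSCPartition_singleton
    (isSCPiece_induce_closedNbhd hkA (isSimplicial_induce_of_subsingleton hkA hsub))

theorem IsBasic5Cycle.exists_isSCPartition_induce_compl_closedNbhd (hd : IsBasic5Cycle G d)
    (hw : w ∉ Set.range d) :
    ∃ Q, IsSCPartition (G.induce (closedNbhd G w)ᶜ) (Subtype.val ⁻¹' Set.range d) Q := by
  by_cases h : ∃ k, G.Adj w (d k)
  · obtain ⟨k, hk⟩ := h
    obtain ⟨d', hd', hrange, hd'0⟩ := hd.exists_rotate (Set.mem_range_self k)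
    rw [← hd'0] at hk
    rw [← hrange] at hw ⊢
    have h0 : 3 ≤ deg G (d' 0) := hd'.1.three_le_deg hw hk
    have hA : ∀ i, deg G (d' i) ≤ 2 → d' i ∈ (closedNbhd G w)ᶜ := fun i hi =>
      notMem_closedNbhd_of_nbhd_subset (Set.mem_range_self i) (hd'.1.nbhd_subset_range hi) hw
    exact ⟨_, hd'.isSCPartition_induce_of_three_le_deg h0 (fun h => h (Or.inr hk))
      (hA 1 (hd'.deg_add_one_le_two h0)) (hA 4 (hd'.deg_sub_one_le_two h0))⟩
  · simp only [not_exists] at h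
    refine ⟨_, hd.isSCPartition_induce ?_⟩
    rintro _ ⟨k, rfl⟩ (e | e)
    exacts [hw ⟨k, e⟩, h k e]

end InducedPartition

section IndependenceNumber

open Function

variable {V : Type*} {G : SimpleGraph V} {A : Set V}

theorem indepNum_induce_eq {n : ℕ} (hex : ∃ S ⊆ A, IsIndep G S ∧ S.ncard = n)
    (hle : ∀ S ⊆ A, IsIndep G S → S.ncard ≤ n) : _root_.indepNum (G.induce A) = n := by
  have hbdd : ∀ m ∈ {m | ∃ S : Set A, IsIndep (G.induce A) S ∧ S.ncard = m}, m ≤ n := by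
    rintro _ ⟨S, hS, rfl⟩
    rw [← Set.ncard_image_of_injective S Subtype.val_injective]
    refine hle _ (by rintro _ ⟨u, -, rfl⟩; exact u.2) ?_
    rintro _ ⟨a, ha, rfl⟩ _ ⟨b, hb, rfl⟩
    exact hS a ha b hb
  obtain ⟨S, hSA, hS, rfl⟩ := hex
  refine le_antisymm (csSup_le ⟨_, Subtype.val ⁻¹' S, fun a ha b hb => hS _ ha _ hb, rfl⟩ hbdd)
    (le_csSup ⟨_, hbdd⟩ ⟨Subtype.val ⁻¹' S, fun a ha b hb => hS _ ha _ hb, ?_⟩)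
  rw [← Set.ncard_image_of_injective _ Subtype.val_injective, Subtype.image_preimage_coe,
    Set.inter_eq_self_of_subset_right hSA]

theorem ncard_le_sum_of_forall_ncard_inter_le {ι : Type*} [Fintype ι] {S : Set V}
    (B : ι → Set V) (hB : ∀ v, ∃ i, v ∈ B i) {κ : ι → ℕ} (h : ∀ i, (S ∩ B i).ncard ≤ κ i) :
    S.ncard ≤ ∑ i, κ i :=
  calc S.ncard = (⋃ i, S ∩ B i).ncard := by
        rw [← Set.inter_iUnion, Set.iUnion_eq_univ_iff.2 hB, Set.inter_univ]
    _ ≤ ∑ i, (S ∩ B i).ncard := Set.ncard_iUnion_le_of_fintype _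
    _ ≤ ∑ i, κ i := Finset.sum_le_sum fun i _ => h i

theorem isIndep_iUnion {ι : Type*} {B T : ι → Set V} (hB : Pairwise (Disjoint on B))
    (hTB : ∀ i, T i ⊆ B i) (hT : ∀ i, IsIndep G (T i)) (hnbhd : ∀ i, ∀ v ∈ T i, nbhd G v ⊆ B i) :
    IsIndep G (⋃ i, T i) := by
  intro u hu v hv huv
  obtain ⟨i, hu⟩ := Set.mem_iUnion.1 hu
  obtain ⟨j, hv⟩ := Set.mem_iUnion.1 hv
  obtain rfl | hij := eq_or_ne i j
  · exact hT i u hu v hv huv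
  · exact Set.disjoint_left.1 (hB hij) (hnbhd i u hu huv) (hTB j hv)

end IndependenceNumber

section SCDecomposition

variable {V : Type*} {G : SimpleGraph V} {s t : ℕ} {c : Fin s → ZMod 5 → V} {x : Fin t → V}
  {d : ZMod 5 → V} {j₀ : Fin s} {w : V}

def scBlocks (G : SimpleGraph V) (c : Fin s → ZMod 5 → V) (x : Fin t → V) :
    Fin s ⊕ Fin t → Set V :=
  Sum.elim (fun j => Set.range (c j)) (fun i => closedNbhd G (x i))

theorem notMem_range_of_ne (hpart : ∀ v, ∃! p, v ∈ scBlocks G c x p) {j : Fin s} (hj : j ≠ j₀)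
    (hw : w ∈ Set.range (c j₀)) : w ∉ Set.range (c j) := fun h =>
  hj (Sum.inl_injective ((hpart w).unique (y₁ := .inl j) h hw))

theorem notMem_closedNbhd_of_mem_range (hpart : ∀ v, ∃! p, v ∈ scBlocks G c x p)
    (hw : w ∈ Set.range (c j₀)) (i : Fin t) : x i ∉ closedNbhd G w :=
  notMem_closedNbhd_of_nbhd_subset (Or.inl rfl) nbhd_subset_closedNbhd fun h =>
    Sum.inr_ne_inl ((hpart w).unique (y₁ := .inr i) h hw)

variable [Finite V]

theorem inSC_induce_of_scBlocks (hx : ∀ i, IsSimplicial G (x i))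
    (hpart : ∀ v, ∃! p, v ∈ scBlocks G c x p) {A : Set V} (hxA : ∀ i, x i ∈ A)
    (hc : ∀ j, ∃ Q, IsSCPartition (G.induce A) (Subtype.val ⁻¹' Set.range (c j)) Q) :
    InSC (G.induce A) := by
  refine inSC_of_forall_exists_isSCPartition (fun p => Subtype.val ⁻¹' scBlocks G c x p)
    (fun u => hpart u.1) ?_
  rintro (j | i)
  exacts [hc j, ⟨_, (hx i).isSCPartition_induce (hxA i)⟩]

theorem indepNum_induce_eq_of_scBlocks (hx : ∀ i, IsSimplicial G (x i))
    (hpart : ∀ v, ∃! p, v ∈ scBlocks G c x p) {A : Set V} (hxA : ∀ i, x i ∈ A) (κ : Fin s → ℕ)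
    (hle : ∀ S ⊆ A, IsIndep G S → ∀ j, (S ∩ Set.range (c j)).ncard ≤ κ j)
    (hT : ∀ j, ∃ T ⊆ Set.range (c j) ∩ A, IsIndep G T ∧ T.ncard = κ j ∧
      ∀ v ∈ T, nbhd G v ⊆ Set.range (c j)) :
    _root_.indepNum (G.induce A) = ∑ j, κ j + t := by
  choose T hTsub hTind hTcard hTnbhd using hT
  have hdisj := pairwise_disjoint_of_existsUnique_mem hpart
  have hsum : ∑ p, Sum.elim κ (fun _ : Fin t => 1) p = ∑ j, κ j + t := by simp
  set T' : Fin s ⊕ Fin t → Set V := Sum.elim T (fun i => {x i})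
  have hTB : ∀ p, T' p ⊆ scBlocks G c x p := by
    rintro (j | i)
    exacts [fun v hv => (hTsub j hv).1, Set.singleton_subset_iff.2 (Or.inl rfl)]
  rw [← hsum]
  refine indepNum_induce_eq ⟨⋃ p, T' p, ?_, ?_, ?_⟩ fun S hSA hS => ?_
  · refine Set.iUnion_subset ?_
    rintro (j | i)
    exacts [fun v hv => (hTsub j hv).2, Set.singleton_subset_iff.2 (hxA i)]
  · refine isIndep_iUnion hdisj hTB ?_ ?_ <;> rintro (j | i)
    exacts [hTind j, isIndep_singleton _, hTnbhd j, fun v hv => hv ▸ nbhd_subset_closedNbhd]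
  · rw [Set.ncard_iUnion_of_finite (fun _ => Set.toFinite _)
      (fun p q hpq => (hdisj hpq).mono (hTB p) (hTB q)), finsum_eq_sum_of_fintype]
    refine Finset.sum_congr rfl ?_
    rintro (j | i) -
    exacts [hTcard j, Set.ncard_singleton _]
  · refine ncard_le_sum_of_forall_ncard_inter_le _ (fun v => (hpart v).exists) ?_
    rintro (j | i)
    exacts [hle S hSA hS j, (hx i).ncard_inter_closedNbhd_le_one hS]

theorem inSC_induce_compl_singleton (hc : ∀ j, IsBasic5Cycle G (c j))
    (hx : ∀ i, IsSimplicial G (x i)) (hpart : ∀ v, ∃! p, v ∈ scBlocks G c x p)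
    (hd : IsBasic5Cycle G d) (hdc : Set.range d = Set.range (c j₀)) (h0 : 3 ≤ deg G (d 0)) :
    InSC (G.induce ({d 0}ᶜ : Set V)) := by
  have hw : d 0 ∈ Set.range (c j₀) := hdc ▸ Set.mem_range_self 0
  refine inSC_induce_of_scBlocks hx hpart
    (fun i h => notMem_closedNbhd_of_mem_range hpart hw i (Or.inl h)) fun j => ?_
  obtain rfl | hj := eq_or_ne j j₀
  · rw [← hdc]
    exact ⟨_, hd.isSCPartition_induce_of_three_le_deg h0 (fun h => h rfl)
      (hd.1.1.ne (by decide)) (hd.1.1.ne (by decide))⟩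
  · exact ⟨_, (hc j).isSCPartition_induce
      fun v hv (e : v = d 0) => notMem_range_of_ne hpart hj hw (e ▸ hv)⟩

theorem inSC_induce_compl_closedNbhd (hc : ∀ j, IsBasic5Cycle G (c j))
    (hx : ∀ i, IsSimplicial G (x i)) (hpart : ∀ v, ∃! p, v ∈ scBlocks G c x p)
    (hd : IsBasic5Cycle G d) (hdc : Set.range d = Set.range (c j₀)) :
    InSC (G.induce (closedNbhd G (d 0))ᶜ) := by
  have hw : d 0 ∈ Set.range (c j₀) := hdc ▸ Set.mem_range_self 0
  refine inSC_induce_of_scBlocks hx hpart (notMem_closedNbhd_of_mem_range hpart hw) fun j => ?_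
  obtain rfl | hj := eq_or_ne j j₀
  · rw [← hdc]
    obtain ⟨k, hk, hdeg⟩ := hd.exists_deg_le_two
    exact ⟨_, hd.isSCPartition_induce_compl_closedNbhd hk hdeg⟩
  · exact (hc j).exists_isSCPartition_induce_compl_closedNbhd (notMem_range_of_ne hpart hj hw)

theorem indepNum_induce_compl_singleton (hc : ∀ j, IsBasic5Cycle G (c j))
    (hx : ∀ i, IsSimplicial G (x i)) (hpart : ∀ v, ∃! p, v ∈ scBlocks G c x p)
    (hdc : Set.range d = Set.range (c j₀)) (h0 : 3 ≤ deg G (d 0)) :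
    _root_.indepNum (G.induce ({d 0}ᶜ : Set V)) = 2 * s + t := by
  have hw : d 0 ∈ Set.range (c j₀) := hdc ▸ Set.mem_range_self 0
  have := indepNum_induce_eq_of_scBlocks hx hpart (A := {d 0}ᶜ)
    (fun i h => notMem_closedNbhd_of_mem_range hpart hw i (Or.inl h)) (fun _ => 2)
    (fun S _ hS j => (hc j).1.ncard_inter_le_two hS) fun j => ?_
  · simpa [mul_comm] using this
  obtain ⟨T, hT, hind, hcard, hdeg⟩ := (hc j).exists_isIndep_pair
  refine ⟨T, fun v hv => ⟨hT hv, fun (e : v = d 0) => ?_⟩, hind, hcard, fun v hv => (hdeg v hv).2⟩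
  have := (hdeg v hv).1
  rw [e] at this
  omega

theorem indepNum_induce_compl_closedNbhd (hc : ∀ j, IsBasic5Cycle G (c j))
    (hx : ∀ i, IsSimplicial G (x i)) (hpart : ∀ v, ∃! p, v ∈ scBlocks G c x p)
    (hd : IsBasic5Cycle G d) (hdc : Set.range d = Set.range (c j₀)) :
    _root_.indepNum (G.induce (closedNbhd G (d 0))ᶜ) = 2 * s + t - 1 := by
  have hw : d 0 ∈ Set.range (c j₀) := hdc ▸ Set.mem_range_self 0
  have := indepNum_induce_eq_of_scBlocks hx hpart (A := (closedNbhd G (d 0))ᶜ)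
    (notMem_closedNbhd_of_mem_range hpart hw)
    (fun j => if j = j₀ then 1 else 2) (fun S hSA hS j => ?_) fun j => ?_
  · rw [this, Finset.sum_ite, Finset.filter_eq', Finset.filter_ne']
    simp only [Finset.mem_univ, ↓reduceIte, Finset.sum_const, Finset.card_singleton, smul_eq_mul,
      mul_one, Finset.card_erase_of_mem, Finset.card_univ, Fintype.card_fin]
    have := j₀.pos
    omega
  · split_ifs with hj
    · subst hj
      rw [← hdc]
      exact hd.1.ncard_inter_le_one hS hSA
    · exact (hc j).1.ncard_inter_le_two hS
  · split_ifs with hj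
    · subst hj
      rw [← hdc]
      obtain ⟨k, hk, hdeg⟩ := hd.exists_deg_le_two
      refine ⟨{d k}, Set.singleton_subset_iff.2 ⟨⟨k, rfl⟩, hd.1.notMem_closedNbhd_zero hk hdeg⟩,
        isIndep_singleton _, Set.ncard_singleton _, fun v hv => hv ▸ hd.1.nbhd_subset_range hdeg⟩
    · obtain ⟨T, hT, hind, hcard, hdeg⟩ := (hc j).exists_isIndep_pair
      refine ⟨T, fun v hv => ⟨hT hv, ?_⟩, hind, hcard, fun v hv => (hdeg v hv).2⟩
      exact notMem_closedNbhd_of_nbhd_subset (hT hv) (hdeg v hv).2 (notMem_range_of_ne hpart hj hw)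

end SCDecomposition

/-- Let `G` be a connected graph in the class `SC`, with a
partition of `V(G)` into the vertex sets of basic 5-cycles `C^1, …, C^s`
(`s ≥ 1`) and the closed neighborhoods of simplicial vertices `x_1, …, x_t`,
and let `w` be a vertex of `C^1` of degree at least 3.  Then `G∖w` and
`G_w = G∖N[w]` belong to the class `SC`, `α(G∖w) = 2s + t` and
`α(G_w) = 2s + t - 1`. -/
theorem stmt3 {V : Type*} [Fintype V] (G : SimpleGraph V)
    (s t : ℕ) (hs : 1 ≤ s) (c : Fin s → ZMod 5 → V) (x : Fin t → V)
    (hc : ∀ j, IsBasic5Cycle G (c j))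
    (hx : ∀ i, IsSimplicial G (x i))
    (hpart : ∀ v : V, ∃! p : Fin s ⊕ Fin t,
      match p with
      | Sum.inl j => v ∈ Set.range (c j)
      | Sum.inr i => v ∈ closedNbhd G (x i))
    (w : V) (hw : w ∈ Set.range (c ⟨0, by omega⟩)) (hdeg : 3 ≤ deg G w) :
    InSC (G.induce ({w}ᶜ : Set V)) ∧
    InSC (G.induce ((closedNbhd G w)ᶜ)) ∧
    _root_.indepNum (G.induce ({w}ᶜ : Set V)) = 2 * s + t ∧
    _root_.indepNum (G.induce ((closedNbhd G w)ᶜ)) = 2 * s + t - 1 := by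
  have hblocks : ∀ v, ∃! p, v ∈ scBlocks G c x p := fun v =>
    (existsUnique_congr (by rintro (j | i) <;> rfl)).1 (hpart v)
  obtain ⟨d, hd, hdc, rfl⟩ := (hc _).exists_rotate hw
  exact ⟨inSC_induce_compl_singleton hc hx hblocks hd hdc hdeg,
    inSC_induce_compl_closedNbhd hc hx hblocks hd hdc,
    indepNum_induce_compl_singleton hc hx hblocks hdc hdeg,
    indepNum_induce_compl_closedNbhd hc hx hblocks hd hdc⟩
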